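/- arXiv:2309.07053 — 9 statements merged into one kernel-verified Lean document; each statement's English description precedes it below -/
import Mathlib

section
/- For a finitely supported distribution ω on X and a predicate p : X → [0,1] with ω⊨p ≠ 0, the validity of p in the updated distribution is at least the validity in the original: ω|_p ⊨ p ≥ ω ⊨ p. -/
open Finset

noncomputable def validity {X : Type*} [Fintype X] (ω p : X → ℝ) : ℝ := ∑ x, ω x * p x
noncomputable def updateD {X : Type*} [Fintype X] (ω p : X → ℝ) : X → ℝ :=
  fun x => ω x * p x / validity ω p
noncomputable def push {X Y : Type*} [Fintype X] (c : X → Y → ℝ) (ω : X → ℝ) : Y → ℝ :=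
  fun y => ∑ x, ω x * c x y
noncomputable def pull {X Y : Type*} [Fintype Y] (c : X → Y → ℝ) (q : Y → ℝ) : X → ℝ :=
  fun x => ∑ y, c x y * q y
noncomputable def dagger {X Y : Type*} [Fintype X] (c : X → Y → ℝ) (ω : X → ℝ) : Y → X → ℝ :=
  fun y x => ω x * c x y / push c ω y

def IsDist {X : Type*} [Fintype X] (ω : X → ℝ) : Prop :=
  (∀ x, 0 ≤ ω x) ∧ ∑ x, ω x = 1
def IsChannel {X Y : Type*} [Fintype Y] (c : X → Y → ℝ) : Prop :=
  ∀ x, IsDist (c x)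
def IsPred {X : Type*} (p : X → ℝ) : Prop := ∀ x, 0 ≤ p x ∧ p x ≤ 1

theorem stmt2 {X : Type*} [Fintype X] (ω p : X → ℝ)
    (hω : IsDist ω) (hp : IsPred p) (h : validity ω p ≠ 0) :
    validity (updateD ω p) p ≥ validity ω p := by
  have hv0 : 0 ≤ validity ω p :=
    Finset.sum_nonneg fun x _ => mul_nonneg (hω.1 x) (hp x).1
  have hv : 0 < validity ω p := hv0.lt_of_ne (Ne.symm h)
  have key : validity ω p ^ 2 ≤ ∑ x, ω x * p x ^ 2 := by
    have := Finset.sum_sq_le_sum_mul_sum_of_sq_eq_mul Finset.univ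
      (r := fun x => ω x * p x) (f := ω) (g := fun x => ω x * p x ^ 2)
      (fun i _ => hω.1 i) (fun i _ => mul_nonneg (hω.1 i) (sq_nonneg _))
      (fun i _ => by ring)
    simpa [validity, hω.2] using this
  have : validity (updateD ω p) p = (∑ x, ω x * p x ^ 2) / validity ω p := by
    simp only [validity, updateD]
    rw [Finset.sum_div]
    congr 1; ext x; ring
  rw [this, ge_iff_le, le_div_iff₀ hv, ← sq]
  exact key
end

section
/- (Pearl's validity increase) Let c : X → D(Y) be a channel, ω a distribution on X, and q : Y → [0,1] a predicate with ω ⊨ (c≪q) ≠ 0. Define the Pearl posterior ω_P := ω|_{c≪q}. Then the predicted validity increases: (c≫ω_P) ⊨ q ≥ (c≫ω) ⊨ q. -/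
open Finset

theorem stmt3 {X Y : Type*} [Fintype X] [Fintype Y]
    (c : X → Y → ℝ) (ω : X → ℝ) (q : Y → ℝ)
    (hω : IsDist ω) (hc : IsChannel c) (hq : IsPred q)
    (h : validity ω (pull c q) ≠ 0) :
    validity (push c (updateD ω (pull c q))) q ≥ validity (push c ω) q := by
  set p := pull c q with hp
  have swap : ∀ μ : X → ℝ, validity (push c μ) q = validity μ p := by
    intro μ
    simp only [validity, push, pull, hp, Finset.sum_mul, Finset.mul_sum]
    rw [Finset.sum_comm]
    congr 1; ext x; congr 1; ext y; ring
  have hp0 : ∀ x, 0 ≤ p x := fun x =>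
    Finset.sum_nonneg fun y _ => mul_nonneg ((hc x).1 y) (hq y).1
  have hv0 : 0 ≤ validity ω p :=
    Finset.sum_nonneg fun x _ => mul_nonneg (hω.1 x) (hp0 x)
  have hv : 0 < validity ω p := lt_of_le_of_ne hv0 (Ne.symm h)
  rw [swap, swap]
  have hup : validity (updateD ω p) p = (∑ x, ω x * p x ^ 2) / validity ω p := by
    simp only [validity, updateD, div_mul_eq_mul_div, ← Finset.sum_div]
    congr 1; apply Finset.sum_congr rfl; intro x _; ring
  rw [hup, ge_iff_le, le_div_iff₀ hv]
  have key : (∑ x, Real.sqrt (ω x) * (Real.sqrt (ω x) * p x)) ^ 2 ≤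
      (∑ x, Real.sqrt (ω x) ^ 2) * ∑ x, (Real.sqrt (ω x) * p x) ^ 2 :=
    Finset.sum_mul_sq_le_sq_mul_sq Finset.univ _ _
  have e1 : ∀ x, Real.sqrt (ω x) * (Real.sqrt (ω x) * p x) = ω x * p x := by
    intro x
    rw [← mul_assoc, Real.mul_self_sqrt (hω.1 x)]
  have e2 : ∀ x, Real.sqrt (ω x) ^ 2 = ω x := fun x => Real.sq_sqrt (hω.1 x)
  have e3 : ∀ x, (Real.sqrt (ω x) * p x) ^ 2 = ω x * p x ^ 2 := by
    intro x; rw [mul_pow, e2]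
  simp only [e1, e2, e3] at key
  rw [hω.2, one_mul] at key
  calc validity ω p * validity ω p = (∑ x, ω x * p x) ^ 2 := by
        simp [validity, sq]
    _ ≤ ∑ x, ω x * p x ^ 2 := key
end

section
/- Frequentist learning after pushforward recovers the prior: for ω a distribution on a finite type X with every point of X in the support handled appropriately, flrn≫Multinomial[K](ω) = ω, i.e. Σ_{φ ∈ M[K](X)} Multinomial[K](ω)(φ) · φ(x)/K = ω(x) for all x, where K ≥ 1. -/
/-! Since `coefm K φ` is the number of arrangements of `φ`, `multinom K ω φ` is the `φ`-term of the
multinomial expansion of `(∑ y, ω y) ^ K`. Replacing `ω x` by `ω x * X` and differentiating that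
expansion at `X = 1` multiplies each term by the count of `x`, so
`∑ φ, multinom K ω φ * count x φ = K * ω x * (∑ y, ω y) ^ (K - 1)`, which is `K * ω x` for a
distribution `ω`. -/

open Finset

noncomputable def coefm {X : Type*} [Fintype X] [DecidableEq X] (K : ℕ) (φ : Sym X K) : ℝ :=
  (K.factorial : ℝ) / ∏ x, (((φ : Multiset X).count x).factorial : ℝ)
noncomputable def multinom {X : Type*} [Fintype X] [DecidableEq X] (K : ℕ) (ω : X → ℝ)
    (φ : Sym X K) : ℝ :=
  coefm K φ * ∏ x, ω x ^ ((φ : Multiset X).count x)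
noncomputable def flrn {X : Type*} [DecidableEq X] (K : ℕ) (φ : Sym X K) : X → ℝ :=
  fun x => ((φ : Multiset X).count x : ℝ) / K
def acc {X : Type*} {K : ℕ} (v : Fin K → X) : Sym X K :=
  ⟨Multiset.map v Finset.univ.val, by simp⟩
noncomputable def arr {X : Type*} [Fintype X] [DecidableEq X] {K : ℕ} (φ : Sym X K) :
    (Fin K → X) → ℝ :=
  fun v => if acc v = φ then 1 / coefm K φ else 0
noncomputable def Mchan {X Y : Type*} [Fintype X] [DecidableEq X] [Fintype Y] [DecidableEq Y]
    {K : ℕ} (c : X → Y → ℝ) : Sym X K → Sym Y K → ℝ :=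
  fun φ ψ => ∑ v : Fin K → X, arr φ v *
    ∑ w : Fin K → Y, (∏ i, c (v i) (w i)) * (if acc w = ψ then 1 else 0)
open Classical in
noncomputable def klE {Z : Type*} [Fintype Z] (ω ρ : Z → ℝ) : EReal :=
  if ∀ z, ω z ≠ 0 → ρ z ≠ 0 then ((∑ z, ω z * Real.log (ω z / ρ z) : ℝ) : EReal) else ⊤

open Polynomial

section
variable {α : Type*} [DecidableEq α]

lemma Multiset.prod_map_eq_prod_pow_count [Fintype α] {M : Type*} [CommMonoid M]
    (m : Multiset α) (f : α → M) : (m.map f).prod = ∏ x, f x ^ m.count x := by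
  rw [Finset.prod_multiset_map_count]
  exact Finset.prod_subset (subset_univ _) fun x _ hx ↦ by
    rw [Multiset.count_eq_zero_of_notMem (by simpa using hx), pow_zero]

lemma Multiset.prod_map_ite_C_mul_X {R : Type*} [CommSemiring R] (m : Multiset α) (ω : α → R)
    (x : α) :
    (m.map fun y ↦ if y = x then C (ω x) * X else C (ω y)).prod
      = C (m.map ω).prod * X ^ m.count x := by
  induction m using Multiset.induction_on with
  | empty => simp
  | cons a m ih =>
    rw [Multiset.map_cons, Multiset.prod_cons, ih, Multiset.map_cons, Multiset.prod_cons,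
      Multiset.count_cons, C_mul]
    by_cases h : a = x
    · subst h
      simp only [↓reduceIte, pow_succ]
      ring
    · simp only [if_neg h, if_neg (Ne.symm h), add_zero]
      ring

theorem sum_countPerms_mul_prod_map_mul_count [Fintype α] {R : Type*} [CommSemiring R]
    (ω : α → R) (x : α) (K : ℕ) :
    ∑ φ : Sym α K, ((φ : Multiset α).countPerms : R) * ((φ : Multiset α).map ω).prod
      * (φ : Multiset α).count x = K * ω x * (∑ y, ω y) ^ (K - 1) := by
  set f : α → R[X] := fun y ↦ if y = x then C (ω x) * X else C (ω y)
  have heval (y : α) : (f y).eval 1 = ω y := by by_cases hy : y = x <;> simp [f, hy]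
  have hderiv : ∑ y, (derivative (f y)).eval 1 = ω x := by
    simp [f, apply_ite (derivative (R := R)), apply_ite (eval (1 : R))]
  have h := congrArg (fun p ↦ (derivative p).eval 1) (sum_pow (s := univ) f K)
  simp only [sym_univ, derivative_pow, derivative_sum, eval_mul, eval_finsetSum, eval_pow,
    heval, hderiv] at h
  simp only [f, Multiset.prod_map_ite_C_mul_X, derivative_natCast_mul, derivative_C_mul_X_pow,
    eval_mul, eval_natCast, eval_C, eval_pow, eval_X, one_pow, mul_one] at h
  rw [mul_right_comm, h]
  exact sum_congr rfl fun _ _ ↦ mul_assoc ..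

lemma coefm_eq_countPerms [Fintype α] (K : ℕ) (φ : Sym α K) :
    coefm K φ = (φ : Multiset α).countPerms := by
  have hspec := Nat.multinomial_spec univ fun x ↦ (φ : Multiset α).count x
  rw [Multiset.sum_count_eq_card (by simp), Sym.card_coe] at hspec
  have hperms : (φ : Multiset α).countPerms = Nat.multinomial univ (φ : Multiset α).count :=
    Finsupp.multinomial_eq_of_support_subset (subset_univ _)
  rw [coefm, ← hspec, hperms, Nat.cast_mul, Nat.cast_prod]
  field_simp

lemma multinom_eq_countPerms_mul_prod_map [Fintype α] (K : ℕ) (ω : α → ℝ) (φ : Sym α K) :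
    multinom K ω φ = (φ : Multiset α).countPerms * ((φ : Multiset α).map ω).prod := by
  rw [multinom, coefm_eq_countPerms, Multiset.prod_map_eq_prod_pow_count]

end

theorem stmt4 {X : Type*} [Fintype X] [DecidableEq X] (K : ℕ) (hK : 1 ≤ K)
    (ω : X → ℝ) (hω : IsDist ω) (x : X) :
    ∑ φ : Sym X K, multinom K ω φ * (((φ : Multiset X).count x : ℝ) / K) = ω x := by
  have hmean := sum_countPerms_mul_prod_map_mul_count ω x K
  rw [hω.2, one_pow, mul_one] at hmean
  simp_rw [multinom_eq_countPerms_mul_prod_map, ← mul_div_assoc, ← sum_div, hmean]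
  field_simp
end

section
/- Pushforward of the multinomial distribution along the arrangement channel yields the K-fold product: arr ≫ Multinomial[K](ω) = ω^{⊗K}, i.e. Σ_{φ∈M[K](X)} Multinomial[K](ω)(φ) · arr(φ)(x⃗) = Π_{i=1}^K ω(x_i) for every tuple x⃗ ∈ X^K. -/
open Finset

theorem stmt5 {X : Type*} [Fintype X] [DecidableEq X] (K : ℕ)
    (ω : X → ℝ) (hω : IsDist ω) (v : Fin K → X) :
    ∑ φ : Sym X K, multinom K ω φ * arr φ v = ∏ i, ω (v i) := by
  classical
  have hco : coefm K (acc v) ≠ 0 := by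
    unfold coefm
    apply div_ne_zero
    · exact_mod_cast Nat.factorial_ne_zero K
    · apply Finset.prod_ne_zero_iff.mpr
      intro x _
      exact_mod_cast Nat.factorial_ne_zero _
  have hsum : ∑ φ : Sym X K, multinom K ω φ * arr φ v
      = multinom K ω (acc v) * (1 / coefm K (acc v)) := by
    rw [Finset.sum_eq_single (acc v)]
    · simp [arr]
    · intro φ _ hne
      simp [arr, hne.symm]
    · simp
  rw [hsum]
  unfold multinom
  have hprod : ∏ x, ω x ^ (((acc v : Sym X K) : Multiset X).count x) = ∏ i, ω (v i) := by
    have h1 : ((Multiset.map v Finset.univ.val).map ω).prod = ∏ i, ω (v i) := by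
      simp [Finset.prod]
      rfl
    rw [← h1, Finset.prod_multiset_map_count]
    rw [← Finset.prod_subset (Finset.subset_univ (Multiset.map v Finset.univ.val).toFinset)]
    · rfl
    · intro x _ hx
      have : (Multiset.map v Finset.univ.val).count x = 0 :=
        Multiset.count_eq_zero_of_notMem (by simpa using hx)
      show ω x ^ Multiset.count x (Multiset.map v Finset.univ.val) = 1
      rw [this]; simp
  rw [hprod]
  field_simp
end

section
/- Daggers preserve sequential composition: for channels c : X → D(Y), d : Y → D(Z) and a distribution ω on X (with all required normalizers nonzero), (d∘c)†_ω = c†_ω ∘ d†_{c≫ω}, i.e. for each z, pushing d†_{c≫ω}(z) forward along c†_ω yields (d∘c)†_ω(z). -/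
open Finset

noncomputable def comp {X Y Z : Type*} [Fintype Y] (d : Y → Z → ℝ) (c : X → Y → ℝ) :
    X → Z → ℝ := fun x z => ∑ y, c x y * d y z

theorem stmt6 {X Y Z : Type*} [Fintype X] [Fintype Y] [Fintype Z]
    (c : X → Y → ℝ) (d : Y → Z → ℝ) (ω : X → ℝ)
    (hω : IsDist ω) (hc : IsChannel c) (hd : IsChannel d)
    (h1 : ∀ y, push c ω y ≠ 0) (h2 : ∀ z, push d (push c ω) z ≠ 0) :
    ∀ z x, dagger (comp d c) ω z x =
      ∑ y, dagger d (push c ω) z y * dagger c ω y x := by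
  have key : ∀ z, push (comp d c) ω z = push d (push c ω) z := by
    intro z
    simp only [push, comp, Finset.mul_sum, Finset.sum_mul]
    rw [Finset.sum_comm]
    apply Finset.sum_congr rfl; intros; apply Finset.sum_congr rfl; intros; ring
  intro z x
  rw [show (∑ y, dagger d (push c ω) z y * dagger c ω y x) =
      (∑ y, ω x * c x y * d y z / push c ω y * (push c ω y / push d (push c ω) z)) from ?_]
  · simp only [div_mul_div_comm]
    have : ∀ y, ω x * c x y * d y z * push c ω y / (push c ω y * push d (push c ω) z)
        = ω x * c x y * d y z / push d (push c ω) z := by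
      intro y
      rw [mul_comm (ω x * c x y * d y z), mul_div_mul_left _ _ (h1 y)]
    simp only [this]
    rw [← Finset.sum_div]
    simp only [dagger, key, comp, Finset.mul_sum]
    congr 1
    apply Finset.sum_congr rfl; intros; ring
  · apply Finset.sum_congr rfl; intro y _
    simp only [dagger]
    field_simp
end

section
/- Daggers preserve parallel composition: for channels c : X → D(A), d : Y → D(B) and distributions ω on X, ρ on Y, the Bayesian inversion of the tensor channel satisfies (c⊗d)†_{ω⊗ρ} = c†_ω ⊗ d†_ρ, i.e. (c⊗d)†_{ω⊗ρ}(a,b)(x,y) = c†_ω(a)(x) · d†_ρ(b)(y) whenever (c≫ω)(a) ≠ 0 and (d≫ρ)(b) ≠ 0. -/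
open Finset

theorem stmt7 {X Y A B : Type*} [Fintype X] [Fintype Y] [Fintype A] [Fintype B]
    (c : X → A → ℝ) (d : Y → B → ℝ) (ω : X → ℝ) (ρ : Y → ℝ)
    (hω : IsDist ω) (hρ : IsDist ρ) (hc : IsChannel c) (hd : IsChannel d) :
    ∀ a b x y, push c ω a ≠ 0 → push d ρ b ≠ 0 →
      dagger (fun (p : X × Y) (q : A × B) => c p.1 q.1 * d p.2 q.2)
        (fun p : X × Y => ω p.1 * ρ p.2) (a, b) (x, y)
      = dagger c ω a x * dagger d ρ b y := by
  intro a b x y ha hb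
  have hpush : push (fun (p : X × Y) (q : A × B) => c p.1 q.1 * d p.2 q.2)
      (fun p : X × Y => ω p.1 * ρ p.2) (a, b) = push c ω a * push d ρ b := by
    simp only [push, Fintype.sum_prod_type, Finset.sum_mul_sum]
    exact Finset.sum_congr rfl fun u _ => Finset.sum_congr rfl fun v _ => by ring
  simp only [dagger, hpush]
  field_simp
end

section
/- Jeffrey likelihood is ordered oppositely to Kullback–Leibler divergence: for distributions σ, σ' on a finite type Y (both with full support on the support of ψ) and a nonempty multiset ψ of size K over Y, Multinomial[K](σ)(ψ) ≤ Multinomial[K](σ')(ψ) if and only if D_KL(flrn(ψ), σ) ≥ D_KL(flrn(ψ), σ'). -/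
open Finset

noncomputable def KL {Y : Type*} [Fintype Y] (ω ρ : Y → ℝ) : ℝ :=
  ∑ y, ω y * Real.log (ω y / ρ y)

/-! For fixed `ψ`, `log Multinomial[K](σ)(ψ) = log (K! / ∏ ψ(y)!) + K · ∑ flrn(ψ)(y) · log σ(y)`,
while `D_KL(flrn ψ, σ) = ∑ flrn(ψ)(y) · log flrn(ψ)(y) - ∑ flrn(ψ)(y) · log σ(y)`. Both depend on `σ`
only through the cross term `∑ flrn(ψ)(y) · log σ(y)`, increasingly and decreasingly respectively. -/

section Multinomial

variable {X : Type*} [DecidableEq X] {K : ℕ}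

lemma count_pos_of_flrn_ne_zero {φ : Sym X K} {x : X} (h : flrn K φ x ≠ 0) :
    0 < (φ : Multiset X).count x := by
  refine Nat.pos_of_ne_zero fun h0 => h ?_
  simp [flrn, h0]

lemma coefm_pos [Fintype X] (φ : Sym X K) : 0 < coefm K φ := by
  unfold coefm
  positivity

lemma pow_count_pos {ω : X → ℝ} {φ : Sym X K}
    (hω : ∀ x, 0 < (φ : Multiset X).count x → 0 < ω x) (x : X) :
    0 < ω x ^ (φ : Multiset X).count x := by
  rcases Nat.eq_zero_or_pos ((φ : Multiset X).count x) with h | h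
  · simp [h]
  · exact pow_pos (hω x h) _

lemma prod_pow_count_pos [Fintype X] {ω : X → ℝ} {φ : Sym X K}
    (hω : ∀ x, 0 < (φ : Multiset X).count x → 0 < ω x) :
    0 < ∏ x, ω x ^ (φ : Multiset X).count x :=
  prod_pos fun x _ => pow_count_pos hω x

lemma multinom_le_multinom_iff [Fintype X] {ω ρ : X → ℝ} {φ : Sym X K} :
    multinom K ω φ ≤ multinom K ρ φ ↔
      ∏ x, ω x ^ (φ : Multiset X).count x ≤ ∏ x, ρ x ^ (φ : Multiset X).count x :=
  mul_le_mul_iff_right₀ (coefm_pos φ)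

lemma log_prod_pow_count [Fintype X] {ω : X → ℝ} {φ : Sym X K}
    (hω : ∀ x, 0 < (φ : Multiset X).count x → 0 < ω x) :
    Real.log (∏ x, ω x ^ (φ : Multiset X).count x)
      = ∑ x, ((φ : Multiset X).count x : ℝ) * Real.log (ω x) := by
  rw [Real.log_prod fun x _ => (pow_count_pos hω x).ne']
  exact sum_congr rfl fun x _ => Real.log_pow _ _

lemma sum_flrn_mul_log [Fintype X] {ω : X → ℝ} {φ : Sym X K}
    (hω : ∀ x, 0 < (φ : Multiset X).count x → 0 < ω x) :
    ∑ x, flrn K φ x * Real.log (ω x) = Real.log (∏ x, ω x ^ (φ : Multiset X).count x) / K := by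
  rw [log_prod_pow_count hω, sum_div]
  exact sum_congr rfl fun x _ => div_mul_eq_mul_div _ _ _

end Multinomial

section KL

variable {Y : Type*} [Fintype Y]

lemma KL_eq_sub_sum_mul_log {ω ρ : Y → ℝ} (h : ∀ y, ω y ≠ 0 → ρ y ≠ 0) :
    KL ω ρ = ∑ y, ω y * Real.log (ω y) - ∑ y, ω y * Real.log (ρ y) := by
  rw [KL, ← sum_sub_distrib]
  refine sum_congr rfl fun y _ => ?_
  by_cases hy : ω y = 0
  · simp [hy]
  · rw [Real.log_div hy (h y hy)]
    ring

lemma KL_le_KL_iff {ω ρ ρ' : Y → ℝ} (h : ∀ y, ω y ≠ 0 → ρ y ≠ 0)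
    (h' : ∀ y, ω y ≠ 0 → ρ' y ≠ 0) :
    KL ω ρ' ≤ KL ω ρ ↔ ∑ y, ω y * Real.log (ρ y) ≤ ∑ y, ω y * Real.log (ρ' y) := by
  rw [KL_eq_sub_sum_mul_log h, KL_eq_sub_sum_mul_log h', sub_le_sub_iff_left]

end KL

theorem stmt8_general {Y : Type*} [Fintype Y] [DecidableEq Y] (K : ℕ) (hK : 1 ≤ K)
    (σ σ' : Y → ℝ) (ψ : Sym Y K)
    (hpos : ∀ y, 0 < (ψ : Multiset Y).count y → 0 < σ y)
    (hpos' : ∀ y, 0 < (ψ : Multiset Y).count y → 0 < σ' y) :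
    multinom K σ ψ ≤ multinom K σ' ψ ↔ KL (flrn K ψ) σ' ≤ KL (flrn K ψ) σ := by
  have hKpos : (0 : ℝ) < K := by exact_mod_cast hK
  have supp {ρ : Y → ℝ} (hρ : ∀ y, 0 < (ψ : Multiset Y).count y → 0 < ρ y) :
      ∀ y, flrn K ψ y ≠ 0 → ρ y ≠ 0 :=
    fun y hy => (hρ y (count_pos_of_flrn_ne_zero hy)).ne'
  rw [multinom_le_multinom_iff, KL_le_KL_iff (supp hpos) (supp hpos'), sum_flrn_mul_log hpos,
    sum_flrn_mul_log hpos', div_le_div_iff_of_pos_right hKpos,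
    Real.log_le_log_iff (prod_pow_count_pos hpos) (prod_pow_count_pos hpos')]

theorem stmt8 {Y : Type*} [Fintype Y] [DecidableEq Y] (K : ℕ) (hK : 1 ≤ K)
    (σ σ' : Y → ℝ) (hσ : IsDist σ) (hσ' : IsDist σ') (ψ : Sym Y K)
    (hpos : ∀ y, 0 < (ψ : Multiset Y).count y → 0 < σ y)
    (hpos' : ∀ y, 0 < (ψ : Multiset Y).count y → 0 < σ' y) :
    multinom K σ ψ ≤ multinom K σ' ψ ↔ KL (flrn K ψ) σ' ≤ KL (flrn K ψ) σ :=
  stmt8_general K hK σ σ' ψ hpos hpos'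
end

section
/- (Pearl update as repeated update) For a channel c : X → D(Y), distribution ω on X, and multiset ψ of size K over Y with nonzero normalizer, updating ω with the predicate x ↦ Multinomial[K](c(x))(ψ) equals updating ω with the conjunction predicate x ↦ Π_{y∈Y} c(x)(y)^{ψ(y)}: ω|_{Multinomial[K](c)≪1_ψ} = ω|_{&_y (c≪1_y)^{ψ(y)}}. -/
open Finset

theorem stmt11 {X Y : Type*} [Fintype X] [Fintype Y] [DecidableEq Y] (K : ℕ)
    (c : X → Y → ℝ) (hc : IsChannel c) (ω : X → ℝ) (hω : IsDist ω) (ψ : Sym Y K)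
    (h : validity ω (fun x => ∏ y, c x y ^ ((ψ : Multiset Y).count y)) ≠ 0) :
    updateD ω (fun x => multinom K (c x) ψ)
      = updateD ω (fun x => ∏ y, c x y ^ ((ψ : Multiset Y).count y)) := by
  have hco : coefm K ψ ≠ 0 := by
    unfold coefm
    apply div_ne_zero
    · exact_mod_cast Nat.factorial_ne_zero K
    · apply Finset.prod_ne_zero_iff.mpr
      intro y _
      exact_mod_cast Nat.factorial_ne_zero _
  have key : ∀ (p : X → ℝ), validity ω (fun x => coefm K ψ * p x) = coefm K ψ * validity ω p := by
    intro p
    unfold validity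
    rw [Finset.mul_sum]
    congr 1; ext x; ring
  funext x
  unfold updateD multinom
  rw [key]
  field_simp
end

section
/- The dagger of the accumulation channel at a product prior is arrangement: for a distribution τ on Y and K ≥ 1, acc†_{τ^{⊗K}}(ψ) = arr(ψ) for every multiset ψ of size K with Multinomial[K](τ)(ψ) ≠ 0; that is, acc†_{τ^{⊗K}}(ψ)(y⃗) = 1/(ψ) if acc(y⃗)=ψ and 0 otherwise. -/
/-!
Under the product prior the weight `∏ i, τ (w i) = ∏ y, τ y ^ ψ(y)` of a tuple `w` depends only
on `acc w`, so the dagger at `ψ` is uniform on the fibre `acc⁻¹ ψ`. That fibre is an orbit of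
`Perm (Fin K)` acting by precomposition; the stabilizer of a point `v` permutes each fibre of `v`,
so it has `∏ y, ψ(y)!` elements and by orbit–stabilizer the orbit has `K! / ∏ y, ψ(y)! = (ψ)`.
-/

open Finset

section
variable {Y : Type*} {K : ℕ}

lemma coe_acc (v : Fin K → Y) : (acc v : Multiset Y) = ↑(List.ofFn v) := by
  rw [← Fin.univ_val_map]; rfl

lemma acc_surjective : Function.Surjective (acc : (Fin K → Y) → Sym Y K) := fun φ => by
  refine ⟨fun i => (φ : Multiset Y).toList.get (i.cast (by simp)), Sym.coe_injective ?_⟩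
  rw [coe_acc, ← List.ofFn_congr (by simp), List.ofFn_get, Multiset.coe_toList]

lemma acc_comp_perm (v : Fin K → Y) (σ : Equiv.Perm (Fin K)) : acc (v ∘ σ) = acc v :=
  Sym.coe_injective <| by simpa only [coe_acc] using Multiset.coe_eq_coe.mpr (σ.ofFn_comp_perm v)

variable [DecidableEq Y]

lemma count_acc (v : Fin K → Y) (y : Y) :
    (acc v : Multiset Y).count y = Fintype.card {i // v i = y} := by
  change (Multiset.map v Finset.univ.val).count y = _
  rw [Multiset.count_map, Fintype.card_subtype]
  simp only [eq_comm]
  rfl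

lemma acc_eq_acc_iff {v w : Fin K → Y} : acc w = acc v ↔ ∃ σ : Equiv.Perm (Fin K), w = v ∘ σ := by
  constructor
  · intro h
    have e : ∀ y, {i // w i = y} ≃ {i // v i = y} := fun y =>
      Fintype.equivOfCardEq <| by rw [← count_acc, ← count_acc, h]
    exact ⟨Equiv.ofFiberEquiv e, funext fun i => (Equiv.ofFiberEquiv_map e i).symm⟩
  · rintro ⟨σ, rfl⟩
    exact acc_comp_perm v σ

open MulAction in
lemma orbit_domMulAct_eq (v : Fin K → Y) :
    orbit (Equiv.Perm (Fin K))ᵈᵐᵃ v = {w | acc w = acc v} := by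
  ext w
  simp only [mem_orbit_iff, Set.mem_ofPred_eq, acc_eq_acc_iff]
  constructor
  · rintro ⟨g, rfl⟩
    exact ⟨DomMulAct.mk.symm g, rfl⟩
  · rintro ⟨σ, rfl⟩
    exact ⟨DomMulAct.mk σ, rfl⟩

variable [Fintype Y]

open MulAction in
lemma card_acc_fiber_mul_prod_factorial (v : Fin K → Y) :
    Nat.card {w // acc w = acc v} * ∏ y, ((acc v : Multiset Y).count y).factorial
      = K.factorial := by
  have hstab : Nat.card (stabilizer (Equiv.Perm (Fin K))ᵈᵐᵃ v)
      = ∏ y, ((acc v : Multiset Y).count y).factorial := by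
    rw [Nat.card_congr (Equiv.subtypeEquiv (q := fun g : Equiv.Perm (Fin K) => v ∘ g = v)
      DomMulAct.mk.symm fun _ => DomMulAct.mem_stabilizer_iff),
      Nat.card_eq_fintype_card, DomMulAct.stabilizer_card]
    simp only [count_acc]
  rw [← hstab, ← Set.coe_ofPred, Nat.card_coe_set_eq, ← orbit_domMulAct_eq, ← index_stabilizer,
    Subgroup.index_mul_card, Nat.card_congr DomMulAct.mk.symm, Nat.card_perm, Nat.card_fin]

lemma sum_ite_acc_eq_coefm (φ : Sym Y K) :
    ∑ v : Fin K → Y, (if acc v = φ then (1 : ℝ) else 0) = coefm K φ := by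
  obtain ⟨v, rfl⟩ := acc_surjective φ
  have hfac : (∏ y, ((acc v : Multiset Y).count y).factorial : ℝ) ≠ 0 := by positivity
  rw [Finset.sum_boole, coefm, eq_div_iff hfac, ← Fintype.card_subtype, ← Nat.card_eq_fintype_card]
  exact_mod_cast card_acc_fiber_mul_prod_factorial v

lemma prod_comp_eq_prod_pow_count_acc {M : Type*} [CommMonoid M] (f : Y → M) (v : Fin K → Y) :
    ∏ i, f (v i) = ∏ y, f y ^ (acc v : Multiset Y).count y := by
  rw [← Finset.prod_fiberwise Finset.univ v]
  refine Finset.prod_congr rfl fun y _ => ?_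
  rw [Finset.prod_congr rfl fun i hi => congrArg f (Finset.mem_filter.mp hi).2, Finset.prod_const,
    count_acc, Fintype.card_subtype]

end

def accChannel (Y : Type*) [DecidableEq Y] (K : ℕ) : (Fin K → Y) → Sym Y K → ℝ :=
  fun w φ => if acc w = φ then 1 else 0

lemma push_accChannel_prod {Y : Type*} [Fintype Y] [DecidableEq Y] {K : ℕ} (τ : Y → ℝ)
    (φ : Sym Y K) : push (accChannel Y K) (fun w => ∏ i, τ (w i)) φ = multinom K τ φ := by
  have hterm : ∀ w : Fin K → Y, (∏ i, τ (w i)) * accChannel Y K w φ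
      = (if acc w = φ then 1 else 0) * ∏ y, τ y ^ (φ : Multiset Y).count y := by
    intro w
    unfold accChannel
    split_ifs with h
    · rw [prod_comp_eq_prod_pow_count_acc, h, mul_one, one_mul]
    · rw [mul_zero, zero_mul]
  simp only [push, hterm, ← Finset.sum_mul, sum_ite_acc_eq_coefm, multinom]

theorem stmt14_general {Y : Type*} [Fintype Y] [DecidableEq Y] (K : ℕ)
    (τ : Y → ℝ) (ψ : Sym Y K) (hψ : multinom K τ ψ ≠ 0) :
    ∀ w : Fin K → Y,
      dagger (fun (w : Fin K → Y) (ψ' : Sym Y K) => if acc w = ψ' then (1:ℝ) else 0)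
        (fun w => ∏ i, τ (w i)) ψ w
      = arr ψ w := by
  intro w
  change dagger (accChannel Y K) _ ψ w = _
  rw [dagger, push_accChannel_prod, arr]
  unfold accChannel
  split_ifs with h
  · rw [mul_one, prod_comp_eq_prod_pow_count_acc, h, multinom,
      div_mul_cancel_right₀ (right_ne_zero_of_mul hψ), one_div]
  · rw [mul_zero, zero_div]

theorem stmt14 {Y : Type*} [Fintype Y] [DecidableEq Y] (K : ℕ) (hK : 1 ≤ K)
    (τ : Y → ℝ) (hτ : IsDist τ) (ψ : Sym Y K) (hψ : multinom K τ ψ ≠ 0) :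
    ∀ w : Fin K → Y,
      dagger (fun (w : Fin K → Y) (ψ' : Sym Y K) => if acc w = ψ' then (1:ℝ) else 0)
        (fun w => ∏ i, τ (w i)) ψ w
      = arr ψ w :=
  stmt14_general K τ ψ hψ
end
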